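/- arXiv:2501.05538 — 7 statements merged into one kernel-verified Lean document; each statement's English description precedes it below -/
import Mathlib

section
/- Let (a_n) be a sequence of complex numbers with |a_n| ≤ 1 for all n, and assume (a_n) is periodic with period N. Then for any positive integer H, (1/N)|∑_{n<N} a_n| ≤ ( (2/H) ∑_{h<H} |(1/N) ∑_{n<N} a_n · conj(a_{n+h})| )^{1/2}. -/
/-!
By periodicity, averaging `a` over windows of length `H` does not change its sum:
`H * ∑ₙ aₙ = ∑ₙ bₙ` with `bₙ = ∑_{h<H} a (n + h)`. Cauchy–Schwarz bounds `|∑ₙ bₙ|²` by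
`N * ∑ₙ |bₙ|²`. Expanding `|bₙ|²` and using periodicity again, `∑ₙ |bₙ|²` is at most a sum over
`h, h' < H` of autocorrelations of `a` at lag `|h - h'|`, and each lag `d < H` arises from at
most `2H` pairs.
-/

open Finset ComplexConjugate

namespace Function.Periodic

variable {M : Type*} [AddCancelCommMonoid M] {f : ℕ → M} {N : ℕ}

theorem sum_range_add (hf : Periodic f N) (k : ℕ) :
    ∑ n ∈ range N, f (n + k) = ∑ n ∈ range N, f n := by
  induction k generalizing f with
  | zero => rfl
  | succ k ih =>
    have hshift : ∑ n ∈ range N, f (n + 1) = ∑ n ∈ range N, f n := by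
      have h := sum_range_succ' f N
      rw [sum_range_succ, hf.eq] at h
      exact (add_right_cancel h).symm
    exact (ih (hf.add_const 1)).trans hshift

end Function.Periodic

theorem sum_range_dist_le_two_mul {f : ℕ → ℝ} (hf : ∀ d, 0 ≤ f d) {h H : ℕ} (hh : h < H) :
    ∑ h' ∈ range H, f (Nat.dist h h') ≤ 2 * ∑ d ∈ range H, f d := by
  have hsub : ∀ {m}, m ≤ H → ∑ d ∈ range m, f d ≤ ∑ d ∈ range H, f d := fun hm =>
    sum_le_sum_of_subset_of_nonneg (range_subset_range.mpr hm) fun d _ _ => hf d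
  have hbelow : ∑ h' ∈ range h, f (Nat.dist h h') ≤ ∑ d ∈ range H, f d := by
    calc ∑ h' ∈ range h, f (Nat.dist h h') = ∑ j ∈ range h, f (j + 1) := by
          rw [← sum_range_reflect]
          refine sum_congr rfl fun j hj => ?_
          rw [Nat.dist_eq_sub_of_le_right (by omega)]
          congr 1
          have := mem_range.mp hj
          omega
      _ ≤ ∑ d ∈ range (h + 1), f d := by
          rw [sum_range_succ']
          exact le_add_of_nonneg_right (hf 0)
      _ ≤ ∑ d ∈ range H, f d := hsub hh
  have habove : ∑ h' ∈ Ico h H, f (Nat.dist h h') ≤ ∑ d ∈ range H, f d := by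
    calc ∑ h' ∈ Ico h H, f (Nat.dist h h') = ∑ d ∈ range (H - h), f d := by
          rw [sum_Ico_eq_sum_range]
          refine sum_congr rfl fun d _ => ?_
          rw [Nat.dist_eq_sub_of_le (by omega), Nat.add_sub_cancel_left]
      _ ≤ ∑ d ∈ range H, f d := hsub (Nat.sub_le H h)
  rw [← sum_range_add_sum_Ico _ hh.le]
  linarith

section Correlation

variable {𝕜 : Type*} [RCLike 𝕜]

theorem sum_norm_sum_sq_le {ι κ : Type*} (s : Finset ι) (t : Finset κ) (f : ι → κ → 𝕜) :
    ∑ i ∈ s, ‖∑ j ∈ t, f i j‖ ^ 2 ≤ ∑ j ∈ t, ∑ j' ∈ t, ‖∑ i ∈ s, f i j * conj (f i j')‖ := by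
  have hexpand : ((∑ i ∈ s, ‖∑ j ∈ t, f i j‖ ^ 2 : ℝ) : 𝕜) =
      ∑ j ∈ t, ∑ j' ∈ t, ∑ i ∈ s, f i j * conj (f i j') := by
    push_cast
    simp_rw [← RCLike.mul_conj, map_sum, sum_mul_sum]
    rw [sum_comm]
    exact sum_congr rfl fun j _ => sum_comm
  calc ∑ i ∈ s, ‖∑ j ∈ t, f i j‖ ^ 2 = ‖((∑ i ∈ s, ‖∑ j ∈ t, f i j‖ ^ 2 : ℝ) : 𝕜)‖ := by
        rw [RCLike.norm_ofReal, abs_of_nonneg (by positivity)]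
    _ ≤ _ := by
        rw [hexpand]
        exact (norm_sum_le _ _).trans (sum_le_sum fun j _ => norm_sum_le _ _)

def autocorr (a : ℕ → 𝕜) (N d : ℕ) : 𝕜 :=
  ∑ n ∈ range N, a n * conj (a (n + d))

variable {a : ℕ → 𝕜} {N : ℕ}

theorem norm_sum_mul_conj_eq_norm_autocorr (ha : Function.Periodic a N) (h h' : ℕ) :
    ‖∑ n ∈ range N, a (n + h) * conj (a (n + h'))‖ = ‖autocorr a N (Nat.dist h h')‖ := by
  wlog hle : h ≤ h' generalizing h h'
  · rw [← RCLike.norm_conj, map_sum, Nat.dist_comm, ← this h' h (by omega)]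
    simp only [map_mul, RCLike.conj_conj, mul_comm]
  have hper : Function.Periodic (fun n => a n * conj (a (n + (h' - h)))) N := fun n => by
    simp only [add_right_comm n N, ha _]
  rw [Nat.dist_eq_sub_of_le hle, autocorr, ← hper.sum_range_add h]
  refine congrArg _ (sum_congr rfl fun n _ => ?_)
  rw [add_assoc, Nat.add_sub_cancel' hle]

theorem sq_mul_norm_sum_le (ha : Function.Periodic a N) (H : ℕ) :
    (H * ‖∑ n ∈ range N, a n‖) ^ 2 ≤ 2 * H * N * ∑ d ∈ range H, ‖autocorr a N d‖ := by
  set b : ℕ → 𝕜 := fun n => ∑ h ∈ range H, a (n + h)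
  have hb : ∑ n ∈ range N, b n = H * ∑ n ∈ range N, a n := by
    rw [sum_comm, sum_congr rfl fun h _ => ha.sum_range_add h, sum_const, card_range, nsmul_eq_mul]
  calc (H * ‖∑ n ∈ range N, a n‖) ^ 2 = ‖∑ n ∈ range N, b n‖ ^ 2 := by
        rw [hb, norm_mul, RCLike.norm_natCast]
    _ ≤ (∑ n ∈ range N, ‖b n‖) ^ 2 := by gcongr; exact norm_sum_le _ _
    _ ≤ N * ∑ n ∈ range N, ‖b n‖ ^ 2 := by
        simpa using sq_sum_le_card_mul_sum_sq (s := range N) (f := fun n => ‖b n‖)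
    _ ≤ N * ∑ h ∈ range H, ∑ h' ∈ range H, ‖autocorr a N (Nat.dist h h')‖ := by
        simp_rw [← norm_sum_mul_conj_eq_norm_autocorr ha]
        gcongr
        exact sum_norm_sum_sq_le _ _ _
    _ ≤ N * ∑ h ∈ range H, 2 * ∑ d ∈ range H, ‖autocorr a N d‖ := by
        gcongr with h hh
        exact sum_range_dist_le_two_mul (fun _ => norm_nonneg _) (mem_range.mp hh)
    _ = 2 * H * N * ∑ d ∈ range H, ‖autocorr a N d‖ := by
        rw [sum_const, card_range, nsmul_eq_mul]
        ring

end Correlation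

theorem vdc_periodic_general (a : ℕ → ℂ) (N H : ℕ) (hH : 0 < H)
    (hper : ∀ n, a (n + N) = a n) :
    (1 / N : ℝ) * ‖∑ n ∈ range N, a n‖ ≤
      Real.sqrt ((2 / H) * ∑ h ∈ range H,
        ‖(1 / N : ℂ) * ∑ n ∈ range N, a n * (starRingEnd ℂ) (a (n + h))‖) := by
  have hmain := sq_mul_norm_sum_le hper H
  have hrhs : ∑ h ∈ range H, ‖(1 / N : ℂ) * ∑ n ∈ range N, a n * (starRingEnd ℂ) (a (n + h))‖ =
      (1 / N) * ∑ d ∈ range H, ‖autocorr a N d‖ := by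
    simp only [norm_mul, norm_div, norm_one, Complex.norm_natCast, ← mul_sum, autocorr]
  rw [hrhs]
  apply Real.le_sqrt_of_sq_le
  rcases N.eq_zero_or_pos with rfl | hN
  · simp
  have hH' : (0 : ℝ) < H := by exact_mod_cast hH
  field_simp
  nlinarith

/-- Van der Corput's inequality in the periodic case. -/
theorem vdc_periodic (a : ℕ → ℂ) (N H : ℕ) (hN : 0 < N) (hH : 0 < H)
    (hbound : ∀ n, ‖a n‖ ≤ 1)
    (hper : ∀ n, a (n + N) = a n) :
    (1 / N : ℝ) * ‖∑ n ∈ range N, a n‖ ≤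
      Real.sqrt ((2 / H) * ∑ h ∈ range H,
        ‖(1 / N : ℂ) * ∑ n ∈ range N, a n * (starRingEnd ℂ) (a (n + h))‖) :=
  vdc_periodic_general a N H hH hper
end

section
/- Let k ≥ 2 be an integer and P an integer polynomial of degree k with leading coefficient ℓ. Then for any positive integer q and any δ > 0, |∑_{x<q} e(P(x)/q)| = O_k( q · (gcd(q, ℓ)/q^{1-δ})^{1/2^{k-1}} ), where e(t) = exp(2πit). For k = 2 the statement also holds with δ = 0. -/
/-!
Write `S = 𝔼_{x mod q} e(P(x)/q)`. Weyl differencing, `|𝔼 f|² ≤ 𝔼_h |𝔼_x f(x+h) f̄(x)|`,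
applied `k-1` times bounds `|S|^{2^{k-1}}` by the average over `h₁, …, h_{k-1}` of the character
sums of the `(k-1)`-fold differences of `P`. These are linear polynomials with slope
`k! h₁ ⋯ h_{k-1} ℓ`, so each such sum has modulus `1` or `0` according as this slope vanishes
mod `q`. The proportion of tuples with vanishing slope is at most `τ(q)^{k-2} gcd(q, k! ℓ) / q`,
because `h c ≡ 0 (mod q)` has `gcd(q, c)` solutions and `∑_{h mod q} gcd(q, h) ≤ q τ(q)`.
The divisor bound `τ(q) ≪_ε q^ε` finishes the proof.
-/

open Finset Complex Real
open scoped BigOperators ComplexConjugate fwdDiff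

lemma conj_expect {ι : Type*} [Fintype ι] (f : ι → ℂ) : conj (𝔼 i, f i) = 𝔼 i, conj (f i) := by
  simp [Fintype.expect_eq_sum_div_card, map_sum]

section WeylDifferencing

variable {G A : Type*} [AddCommGroup G] [Fintype G] [AddCommGroup A]

lemma sq_norm_expect_le_expect_norm_expect_mul_conj (f : G → ℂ) :
    ‖𝔼 x, f x‖ ^ 2 ≤ 𝔼 h, ‖𝔼 x, f (x + h) * conj (f x)‖ := by
  have hcorr : (‖𝔼 x, f x‖ : ℂ) ^ 2 = 𝔼 h, 𝔼 x, f (x + h) * conj (f x) := by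
    rw [← mul_conj', conj_expect, Fintype.expect_mul_expect, Finset.expect_comm]
    conv_rhs => rw [Finset.expect_comm]
    refine Finset.expect_congr rfl fun x _ => ?_
    exact (Fintype.expect_equiv (Equiv.addLeft x) (fun h => f (x + h) * conj (f x))
      (fun y => f y * conj (f x)) fun h => rfl).symm
  calc ‖𝔼 x, f x‖ ^ 2 = ‖𝔼 h, 𝔼 x, f (x + h) * conj (f x)‖ := by
        rw [← hcorr, ← Complex.ofReal_pow, Complex.norm_real, Real.norm_of_nonneg (by positivity)]
    _ ≤ 𝔼 h, ‖𝔼 x, f (x + h) * conj (f x)‖ := RCLike.norm_expect_le (K := ℂ)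

/-- `iteratedDiffNorm ψ j f = 𝔼_{h₁, …, hⱼ} ‖𝔼ₓ ψ (Δ_{hⱼ} ⋯ Δ_{h₁} f x)‖`. -/
noncomputable def iteratedDiffNorm (ψ : AddChar A ℂ) : ℕ → (G → A) → ℝ
  | 0, f => ‖𝔼 x, ψ (f x)‖
  | j + 1, f => 𝔼 h, iteratedDiffNorm ψ j (Δ_[h] f)

variable [Finite A]

lemma sq_norm_expect_addChar_le (ψ : AddChar A ℂ) (f : G → A) :
    ‖𝔼 x, ψ (f x)‖ ^ 2 ≤ 𝔼 h, ‖𝔼 x, ψ (Δ_[h] f x)‖ := by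
  have hΔ : ∀ h x, ψ (Δ_[h] f x) = ψ (f (x + h)) * conj (ψ (f x)) := fun h x => by
    rw [← AddChar.map_neg_eq_conj, ← AddChar.map_add_eq_mul, ← sub_eq_add_neg]
    rfl
  simp only [hΔ]
  exact sq_norm_expect_le_expect_norm_expect_mul_conj (ψ ∘ f)

lemma sq_iteratedDiffNorm_le (ψ : AddChar A ℂ) (j : ℕ) (f : G → A) :
    iteratedDiffNorm ψ j f ^ 2 ≤ iteratedDiffNorm ψ (j + 1) f := by
  induction j generalizing f with
  | zero => exact sq_norm_expect_addChar_le ψ f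
  | succ j ih =>
    have hmean : (𝔼 h, iteratedDiffNorm ψ j (Δ_[h] f)) ^ 2
        ≤ 𝔼 h, iteratedDiffNorm ψ j (Δ_[h] f) ^ 2 := by
      simpa using expect_mul_sq_le_sq_mul_sq univ (fun h => iteratedDiffNorm ψ j (Δ_[h] f)) 1
    exact hmean.trans (expect_le_expect fun h _ => ih _)

theorem norm_expect_pow_le_iteratedDiffNorm (ψ : AddChar A ℂ) (j : ℕ) (f : G → A) :
    ‖𝔼 x, ψ (f x)‖ ^ 2 ^ j ≤ iteratedDiffNorm ψ j f := by
  induction j with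
  | zero => simp [iteratedDiffNorm]
  | succ j ih =>
    calc ‖𝔼 x, ψ (f x)‖ ^ 2 ^ (j + 1) = (‖𝔼 x, ψ (f x)‖ ^ 2 ^ j) ^ 2 := by ring
      _ ≤ iteratedDiffNorm ψ j f ^ 2 := by gcongr
      _ ≤ iteratedDiffNorm ψ (j + 1) f := sq_iteratedDiffNorm_le ψ j f

end WeylDifferencing

namespace Polynomial

variable {R : Type*} [CommRing R] {P : R[X]} {n : ℕ}

lemma coeff_taylor_of_natDegree_le (hP : P.natDegree ≤ n) (r : R) :
    (taylor r P).coeff n = P.coeff n := by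
  have hconst : (hasseDeriv n P).natDegree ≤ 0 :=
    (natDegree_hasseDeriv_le P n).trans (by omega)
  rw [taylor_coeff, eq_C_of_natDegree_le_zero hconst, eval_C, hasseDeriv_coeff]
  simp

lemma coeff_taylor_of_natDegree_le_succ (hP : P.natDegree ≤ n + 1) (r : R) :
    (taylor r P).coeff n = P.coeff n + (n + 1) * P.coeff (n + 1) * r := by
  have hlin : (hasseDeriv n P).natDegree ≤ 1 :=
    (natDegree_hasseDeriv_le P n).trans (by omega)
  rw [taylor_coeff, eq_X_add_C_of_natDegree_le_one hlin]
  simp only [hasseDeriv_coeff, eval_add, eval_mul, eval_C, eval_X, zero_add, Nat.choose_self,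
    add_comm 1 n, Nat.choose_succ_self_right, Nat.cast_succ]
  ring

lemma natDegree_taylor_sub_le (hP : P.natDegree ≤ n + 1) (r : R) :
    (taylor r P - P).natDegree ≤ n := by
  rw [natDegree_le_iff_coeff_eq_zero]
  intro N hN
  rw [coeff_sub, coeff_taylor_of_natDegree_le (hP.trans (Nat.cast_lt.1 hN)) r, sub_self]

lemma coeff_taylor_sub (hP : P.natDegree ≤ n + 1) (r : R) :
    (taylor r P - P).coeff n = (n + 1) * P.coeff (n + 1) * r := by
  rw [coeff_sub, coeff_taylor_of_natDegree_le_succ hP r]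
  ring

lemma fwdDiff_eval (P : R[X]) (r : R) :
    Δ_[r] (fun x => P.eval x) = fun x => (taylor r P - P).eval x := by
  ext x
  simp [fwdDiff, taylor_eval]

end Polynomial

section PrimitiveCharacter

open Polynomial

variable {R : Type*} [CommRing R] [Fintype R] [DecidableEq R] {ψ : AddChar R ℂ}

lemma norm_expect_eval_of_natDegree_le_one (hψ : ψ.IsPrimitive) {P : R[X]}
    (hP : P.natDegree ≤ 1) : ‖𝔼 x, ψ (P.eval x)‖ = if P.coeff 1 = 0 then 1 else 0 := by
  have hsplit : 𝔼 x, ψ (P.eval x) = (𝔼 x, ψ (x * P.coeff 1)) * ψ (P.coeff 0) := by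
    rw [expect_mul]
    refine expect_congr rfl fun x _ => ?_
    conv_lhs => rw [eq_X_add_C_of_natDegree_le_one hP]
    simp only [eval_add, eval_mul, eval_C, eval_X, AddChar.map_add_eq_mul, mul_comm (P.coeff 1)]
  rw [hsplit, norm_mul, AddChar.norm_apply, mul_one, Fintype.expect_eq_sum_div_card,
    AddChar.sum_mulShift _ hψ]
  split_ifs <;> simp [Fintype.card_ne_zero]

variable (R) in
/-- `zeroProductProb R j c` is the probability that `h₁ ⋯ hⱼ * c = 0` for uniform
`h₁, …, hⱼ ∈ R`. -/
noncomputable def zeroProductProb : ℕ → R → ℝ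
  | 0, c => if c = 0 then 1 else 0
  | j + 1, c => 𝔼 h, zeroProductProb j (h * c)

theorem iteratedDiffNorm_eval_le_zeroProductProb (hψ : ψ.IsPrimitive) (j : ℕ) (P : R[X])
    (hP : P.natDegree ≤ j + 1) :
    iteratedDiffNorm ψ j (fun x => P.eval x)
      ≤ zeroProductProb R j ((j + 1).factorial * P.coeff (j + 1)) := by
  induction j generalizing P with
  | zero => simp [iteratedDiffNorm, zeroProductProb, norm_expect_eval_of_natDegree_le_one hψ hP]
  | succ j ih =>
    refine expect_le_expect fun h _ => ?_
    rw [fwdDiff_eval]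
    refine (ih _ (natDegree_taylor_sub_le hP h)).trans_eq (congrArg _ ?_)
    rw [coeff_taylor_sub hP, Nat.factorial_succ (j + 1)]
    push_cast
    ring

end PrimitiveCharacter

namespace ZMod

variable {q : ℕ} [NeZero q]

lemma sum_val_eq_sum_range {M : Type*} [AddCommMonoid M] (f : ℕ → M) :
    ∑ x : ZMod q, f x.val = ∑ i ∈ range q, f i := by
  obtain ⟨n, rfl⟩ := Nat.exists_eq_succ_of_ne_zero (NeZero.ne q)
  exact Fin.sum_univ_eq_sum_range f _

lemma card_filter_dvd_val_le {d : ℕ} (hd : d ∣ q) : #{h : ZMod q | d ∣ h.val} ≤ q / d := by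
  calc #{h : ZMod q | d ∣ h.val}
      ≤ #((range (q / d)).image fun i => ((i * d : ℕ) : ZMod q)) := by
        refine card_le_card fun h hh => ?_
        obtain ⟨i, hi⟩ := (mem_filter.1 hh).2
        refine mem_image.2 ⟨i, mem_range.2 ?_, by rw [Nat.mul_comm i d, ← hi, natCast_zmod_val]⟩
        rw [Nat.lt_div_iff_mul_lt' hd, ← hi]
        exact val_lt h
    _ ≤ q / d := card_image_le.trans (card_range _).le

lemma card_mul_eq_zero_le (c : ZMod q) : #{h : ZMod q | h * c = 0} ≤ Nat.gcd q c.val := by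
  have hq : 0 < q := Nat.pos_of_ne_zero (NeZero.ne q)
  calc #{h : ZMod q | h * c = 0}
      ≤ #{h : ZMod q | q / Nat.gcd q c.val ∣ h.val} := by
        refine card_le_card fun h hh => mem_filter.2 ⟨mem_univ _, ?_⟩
        have hmod : h.val * c.val ≡ 0 * c.val [MOD q] := by
          rw [← natCast_eq_natCast_iff, Nat.cast_mul, natCast_zmod_val, natCast_zmod_val,
            (mem_filter.1 hh).2, Nat.cast_mul, Nat.cast_zero, zero_mul]
        exact Nat.modEq_zero_iff_dvd.1 (Nat.ModEq.cancel_right_div_gcd hq hmod)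
    _ ≤ q / (q / Nat.gcd q c.val) :=
        card_filter_dvd_val_le (Nat.div_dvd_of_dvd (Nat.gcd_dvd_left _ _))
    _ = Nat.gcd q c.val := Nat.div_div_self (Nat.gcd_dvd_left _ _) hq.ne'

lemma sum_gcd_val_le : ∑ h : ZMod q, Nat.gcd q h.val ≤ q * #q.divisors := by
  calc ∑ h : ZMod q, Nat.gcd q h.val
      ≤ ∑ h : ZMod q, ∑ d ∈ q.divisors, if d ∣ h.val then d else 0 := by
        refine sum_le_sum fun h _ => ?_
        rw [← sum_filter]
        exact single_le_sum (f := id) (fun _ _ => Nat.zero_le _) (mem_filter.2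
          ⟨Nat.mem_divisors.2 ⟨Nat.gcd_dvd_left _ _, NeZero.ne q⟩, Nat.gcd_dvd_right _ _⟩)
    _ = ∑ d ∈ q.divisors, #{h : ZMod q | d ∣ h.val} * d := by
        rw [sum_comm]
        refine sum_congr rfl fun d _ => ?_
        rw [← sum_filter, sum_const, smul_eq_mul]
    _ ≤ ∑ d ∈ q.divisors, q / d * d := sum_le_sum fun d hd =>
        Nat.mul_le_mul_right _ (card_filter_dvd_val_le (Nat.dvd_of_mem_divisors hd))
    _ = q * #q.divisors := by
        rw [sum_congr rfl fun d hd => Nat.div_mul_cancel (Nat.dvd_of_mem_divisors hd), sum_const,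
          smul_eq_mul, mul_comm]

lemma expect_gcd_val_le : 𝔼 h : ZMod q, (Nat.gcd q h.val : ℝ) ≤ #q.divisors := by
  have hq : (0 : ℝ) < q := Nat.cast_pos.2 (Nat.pos_of_ne_zero (NeZero.ne q))
  rw [Fintype.expect_eq_sum_div_card, ZMod.card, div_le_iff₀ hq, mul_comm]
  exact_mod_cast sum_gcd_val_le

lemma gcd_val_mul_le (h c : ZMod q) :
    Nat.gcd q (h * c).val ≤ Nat.gcd q h.val * Nat.gcd q c.val := by
  have hq : 0 < q := Nat.pos_of_ne_zero (NeZero.ne q)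
  rw [val_mul, Nat.gcd_comm q, ← Nat.gcd_rec]
  exact Nat.le_of_dvd (Nat.mul_pos (Nat.gcd_pos_of_pos_left _ hq) (Nat.gcd_pos_of_pos_left _ hq))
    (Nat.gcd_mul_right_dvd_mul_gcd _ _ _)

lemma gcd_val_intCast (c : ℤ) : Nat.gcd q (c : ZMod q).val = Nat.gcd q c.natAbs := by
  rw [← Int.gcd_natCast_natCast, val_intCast, Int.gcd_comm, Int.gcd_emod, Int.gcd_comm]
  rfl

theorem zeroProductProb_succ_le (j : ℕ) (c : ZMod q) :
    zeroProductProb (ZMod q) (j + 1) c ≤ (#q.divisors : ℝ) ^ j * Nat.gcd q c.val / q := by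
  induction j generalizing c with
  | zero =>
    rw [zeroProductProb, pow_zero, one_mul, Fintype.expect_eq_sum_div_card, ZMod.card]
    simp only [zeroProductProb, sum_boole]
    gcongr
    exact_mod_cast card_mul_eq_zero_le c
  | succ j ih =>
    set τ : ℝ := (#q.divisors : ℝ)
    calc zeroProductProb (ZMod q) (j + 2) c
        = 𝔼 h, zeroProductProb (ZMod q) (j + 1) (h * c) := rfl
      _ ≤ 𝔼 h : ZMod q, τ ^ j * Nat.gcd q (h * c).val / q := expect_le_expect fun h _ => ih _
      _ ≤ 𝔼 h : ZMod q, τ ^ j * Nat.gcd q c.val / q * Nat.gcd q h.val := by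
        refine expect_le_expect fun h _ => ?_
        rw [div_mul_eq_mul_div, mul_assoc, mul_comm (Nat.gcd q c.val : ℝ)]
        gcongr
        exact_mod_cast gcd_val_mul_le h c
      _ = τ ^ j * Nat.gcd q c.val / q * 𝔼 h : ZMod q, (Nat.gcd q h.val : ℝ) := by
        rw [mul_expect]
      _ ≤ τ ^ j * Nat.gcd q c.val / q * τ := by gcongr; exact expect_gcd_val_le
      _ = τ ^ (j + 1) * Nat.gcd q c.val / q := by ring

end ZMod

lemma exists_add_one_le_mul_rpow {ε : ℝ} (hε : 0 < ε) :
    ∃ C ≥ (1 : ℝ), ∀ (a : ℕ) {p : ℝ}, 2 ≤ p → (a + 1 : ℝ) ≤ C * p ^ (a * ε) := by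
  set u := ε * Real.log 2
  have hu : 0 < u := mul_pos hε (Real.log_pos one_lt_two)
  refine ⟨1 + u⁻¹, by simp [hu.le], fun a p hp => ?_⟩
  have hexp : 1 + a * u ≤ p ^ (a * ε) := by
    rw [Real.rpow_def_of_pos (by linarith)]
    calc 1 + a * u ≤ 1 + a * ε * Real.log p := by
          have := Real.log_le_log two_pos hp
          simp only [u]; rw [← mul_assoc]; gcongr
      _ ≤ Real.exp (Real.log p * (a * ε)) := by
          rw [add_comm, mul_comm]; exact Real.add_one_le_exp _
  have hexpand : (1 + u⁻¹) * (1 + a * u) = a + 1 + (a * u + u⁻¹) := by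
    field_simp; ring
  calc (a + 1 : ℝ) ≤ (1 + u⁻¹) * (1 + a * u) := by
        rw [hexpand]
        exact le_add_of_nonneg_right (by positivity)
    _ ≤ (1 + u⁻¹) * p ^ (a * ε) := by gcongr

lemma add_one_le_rpow {ε : ℝ} (hε : 0 < ε) (a : ℕ) {p : ℝ} (hp : (2 : ℝ) ^ ε⁻¹ ≤ p) :
    (a + 1 : ℝ) ≤ p ^ (a * ε) :=
  calc (a + 1 : ℝ) ≤ 2 ^ a := by exact_mod_cast Nat.lt_two_pow_self
    _ = ((2 : ℝ) ^ ε⁻¹) ^ (a * ε) := by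
        rw [← Real.rpow_mul zero_le_two, mul_comm (a : ℝ), inv_mul_cancel_left₀ hε.ne',
          Real.rpow_natCast]
    _ ≤ p ^ (a * ε) := by gcongr

namespace Nat

lemma cast_rpow_eq_prod_primeFactors {n : ℕ} (hn : n ≠ 0) (ε : ℝ) :
    (n : ℝ) ^ ε = ∏ p ∈ n.primeFactors, (p : ℝ) ^ (n.factorization p * ε) := by
  conv_lhs => rw [← Nat.prod_factorization_pow_eq_self hn]
  rw [Nat.prod_factorization_eq_prod_primeFactors, Nat.cast_prod,
    ← Real.finsetProd_rpow _ _ fun p _ => by positivity]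
  refine prod_congr rfl fun p _ => ?_
  rw [Nat.cast_pow, ← Real.rpow_natCast, ← Real.rpow_mul (Nat.cast_nonneg p)]

-- `τ(n) = ∏ (aₚ + 1)`; a prime `p ≥ 2^{1/ε}` has `aₚ + 1 ≤ p^{aₚ ε}`, and each of the fewer
-- than `N` smaller primes costs at most the factor `C`.
theorem exists_card_divisors_le_mul_rpow {ε : ℝ} (hε : 0 < ε) :
    ∃ C > 0, ∀ n : ℕ, n ≠ 0 → (#n.divisors : ℝ) ≤ C * n ^ ε := by
  obtain ⟨C, hC, hsmall⟩ := exists_add_one_le_mul_rpow hε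
  obtain ⟨N, hN⟩ := exists_nat_ge ((2 : ℝ) ^ ε⁻¹)
  refine ⟨C ^ N, by positivity, fun n hn => ?_⟩
  have hfactor : ∀ p ∈ n.primeFactors, (n.factorization p + 1 : ℝ)
      ≤ (if p < N then C else 1) * (p : ℝ) ^ (n.factorization p * ε) := by
    intro p hp
    split_ifs with hpN
    · exact hsmall _ (by exact_mod_cast (Nat.prime_of_mem_primeFactors hp).two_le)
    · rw [one_mul]
      exact add_one_le_rpow hε _ (hN.trans (by exact_mod_cast not_lt.1 hpN))
  have hsmall_primes : ∏ p ∈ n.primeFactors, (if p < N then C else 1) ≤ C ^ N := by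
    rw [prod_ite, prod_const, prod_const_one, mul_one]
    refine pow_le_pow_right₀ hC ((card_le_card fun p hp => ?_).trans (card_range N).le)
    exact mem_range.2 (mem_filter.1 hp).2
  calc (#n.divisors : ℝ) = ∏ p ∈ n.primeFactors, (n.factorization p + 1 : ℝ) := by
        rw [Nat.card_divisors hn]; push_cast; rfl
    _ ≤ ∏ p ∈ n.primeFactors, (if p < N then C else 1) * (p : ℝ) ^ (n.factorization p * ε) :=
        prod_le_prod (fun _ _ => by positivity) hfactor
    _ ≤ C ^ N * n ^ ε := by
        rw [prod_mul_distrib, cast_rpow_eq_prod_primeFactors hn]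
        gcongr

theorem exists_card_divisors_pow_le_mul_rpow (t : ℕ) {δ : ℝ} (hδ : 0 < δ ∨ t = 0 ∧ 0 ≤ δ) :
    ∃ C > 0, ∀ n : ℕ, n ≠ 0 → (#n.divisors : ℝ) ^ t ≤ C * n ^ δ := by
  rcases Nat.eq_zero_or_pos t with rfl | ht
  · have hδ0 : 0 ≤ δ := hδ.elim le_of_lt And.right
    refine ⟨1, one_pos, fun n hn => ?_⟩
    simpa using Real.one_le_rpow (by exact_mod_cast Nat.one_le_iff_ne_zero.2 hn) hδ0
  have htR : (0 : ℝ) < t := Nat.cast_pos.2 ht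
  obtain ⟨C, hC, hdiv⟩ := exists_card_divisors_le_mul_rpow
    (_root_.div_pos (hδ.resolve_right fun h => ht.ne' h.1) htR)
  refine ⟨C ^ t, by positivity, fun n hn => ?_⟩
  calc (#n.divisors : ℝ) ^ t ≤ (C * n ^ (δ / t)) ^ t := by gcongr; exact hdiv n hn
    _ = C ^ t * n ^ δ := by
      rw [mul_pow, ← Real.rpow_natCast ((n : ℝ) ^ (δ / t)), ← Real.rpow_mul (Nat.cast_nonneg n),
        div_mul_cancel₀ _ htR.ne']

lemma gcd_mul_le_mul_gcd {q : ℕ} (hq : 0 < q) {m : ℕ} (hm : 0 < m) (a : ℕ) :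
    Nat.gcd q (m * a) ≤ m * Nat.gcd q a :=
  Nat.le_of_dvd (Nat.mul_pos hm (Nat.gcd_pos_of_pos_left _ hq))
    ((Nat.gcd_mul_right_dvd_mul_gcd q m a).trans (Nat.mul_dvd_mul_right (Nat.gcd_dvd_right q m) _))

end Nat

lemma le_rpow_one_div_two_pow_of_pow_le {x a b : ℝ} (n : ℕ) (hx : 0 ≤ x) (ha : 0 ≤ a)
    (hb : 0 ≤ b) (h : x ^ 2 ^ n ≤ a * b) :
    x ≤ a ^ ((1 : ℝ) / 2 ^ n) * b ^ ((1 : ℝ) / 2 ^ n) := by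
  rw [← Real.mul_rpow ha hb, one_div, Real.le_rpow_inv_iff_of_pos hx (by positivity)
    (by positivity)]
  exact_mod_cast h

section ExponentialSum

open Polynomial

lemma sum_range_exp_eq_mul_expect (q : ℕ) [NeZero q] (P : ℤ[X]) :
    ∑ x ∈ range q, Complex.exp (2 * π * Complex.I * (P.eval (x : ℤ)) / q)
      = q * 𝔼 x : ZMod q, ZMod.stdAddChar ((P.map (Int.castRingHom (ZMod q))).eval x) := by
  rw [← ZMod.sum_val_eq_sum_range, ← Fintype.card_mul_expect, ZMod.card]
  refine congrArg _ (expect_congr rfl fun x _ => ?_)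
  conv_rhs => rw [← ZMod.natCast_zmod_val x, ← Int.cast_natCast]
  rw [eval_intCast_map, eq_intCast, ZMod.stdAddChar_coe, Int.cast_id]

theorem norm_expect_stdAddChar_eval_pow_le (q : ℕ) [NeZero q] (t : ℕ) {P : ℤ[X]}
    (hP : P.natDegree = t + 2) :
    ‖𝔼 x : ZMod q, ZMod.stdAddChar ((P.map (Int.castRingHom (ZMod q))).eval x)‖ ^ 2 ^ (t + 1)
      ≤ (#q.divisors : ℝ) ^ t * ((t + 2).factorial * Nat.gcd q P.leadingCoeff.natAbs) / q := by
  set P' := P.map (Int.castRingHom (ZMod q))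
  have hP' : P'.natDegree ≤ t + 2 := natDegree_map_le.trans hP.le
  have hcoeff : ((t + 2).factorial * P'.coeff (t + 2) : ZMod q)
      = (((t + 2).factorial * P.leadingCoeff : ℤ) : ZMod q) := by
    simp [P', coeff_map, leadingCoeff, hP]
  have hgcd : Nat.gcd q ((t + 2).factorial * P.leadingCoeff).natAbs
      ≤ (t + 2).factorial * Nat.gcd q P.leadingCoeff.natAbs := by
    rw [Int.natAbs_mul, Int.natAbs_natCast]
    exact Nat.gcd_mul_le_mul_gcd (Nat.pos_of_ne_zero (NeZero.ne q)) (Nat.factorial_pos _) _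
  calc _ ≤ iteratedDiffNorm ZMod.stdAddChar (t + 1) (fun x => P'.eval x) :=
        norm_expect_pow_le_iteratedDiffNorm _ _ _
    _ ≤ zeroProductProb (ZMod q) (t + 1) ((t + 2).factorial * P'.coeff (t + 2)) :=
        iteratedDiffNorm_eval_le_zeroProductProb (ZMod.isPrimitive_stdAddChar q) _ _ hP'
    _ ≤ (#q.divisors : ℝ) ^ t * Nat.gcd q ((t + 2).factorial * P'.coeff (t + 2)).val / q :=
        ZMod.zeroProductProb_succ_le _ _
    _ ≤ _ := by
        rw [hcoeff, ZMod.gcd_val_intCast]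
        gcongr
        exact_mod_cast hgcd

end ExponentialSum

/-- Lemma 3.1: Weyl-type bound for complete exponential sums with polynomial phase.
For fixed degree `k ≥ 2` and `δ > 0` (or `δ = 0` if `k = 2`) there is a constant
`Ck` (depending only on `k` and `δ`) such that for every integer polynomial `P`
of degree `k` with leading coefficient `ℓ` and every positive integer `q`,
`|∑_{x<q} e(P(x)/q)| ≤ Ck · q · (gcd(q,ℓ)/q^{1-δ})^{1/2^{k-1}}`. -/
theorem poly_exp_sum_bound (k : ℕ) (hk : 2 ≤ k) (δ : ℝ)
    (hδ : 0 < δ ∨ (k = 2 ∧ δ = 0)) :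
    ∃ Ck : ℝ, 0 < Ck ∧ ∀ (P : Polynomial ℤ), P.natDegree = k → ∀ q : ℕ, 0 < q →
      ‖∑ x ∈ range q, Complex.exp (2 * π * Complex.I * (P.eval (x : ℤ)) / q)‖ ≤
        Ck * q * ((Nat.gcd q P.leadingCoeff.natAbs : ℝ) / (q : ℝ) ^ (1 - δ))
          ^ ((1 : ℝ) / 2 ^ (k - 1)) := by
  obtain ⟨t, rfl⟩ : ∃ t, k = t + 2 := ⟨k - 2, by omega⟩
  obtain ⟨C, hC, hτ⟩ := Nat.exists_card_divisors_pow_le_mul_rpow t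
    (hδ.imp_right fun h => ⟨by omega, h.2.ge⟩)
  refine ⟨((t + 2).factorial * C) ^ ((1 : ℝ) / 2 ^ (t + 1)), by positivity, fun P hP q hq => ?_⟩
  have : NeZero q := ⟨hq.ne'⟩
  have hqR : (0 : ℝ) < q := Nat.cast_pos.2 hq
  set G : ℝ := (Nat.gcd q P.leadingCoeff.natAbs : ℝ)
  have hbound : (#q.divisors : ℝ) ^ t * ((t + 2).factorial * G) / q
      ≤ (t + 2).factorial * C * (G / q ^ (1 - δ)) := calc
    _ ≤ C * q ^ δ * ((t + 2).factorial * G) / q := by gcongr; exact hτ q hq.ne'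
    _ = _ := by
      rw [Real.rpow_sub hqR, Real.rpow_one]
      field_simp
  rw [sum_range_exp_eq_mul_expect, norm_mul, Complex.norm_natCast, show t + 2 - 1 = t + 1 from rfl]
  have hroot := le_rpow_one_div_two_pow_of_pow_le _ (norm_nonneg _) (by positivity)
    (by positivity) ((norm_expect_stdAddChar_eval_pow_le q t hP).trans hbound)
  exact (mul_le_mul_of_nonneg_left hroot hqR.le).trans_eq (by ring)
end

section
/- Let (X, d) be a metric space and T : X → X a homeomorphism. Suppose there exists an increasing sequence (q_n) of positive integers with gcd(q_n, q_{n+1}) = 1 for all n, such that sup_{t < q_{n+1}} sup_{x ∈ X} d(x, T^{t q_n} x) → 0 as n → ∞. Then T is the identity map. -/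
/-! Bézout gives `a < q (n+1)` and `b < q n` with `a * q n = b * q (n+1) + 1`. Then
`T^[a * q n] x = T^[b * q (n+1)] (T x)`, and both iterates move every point by less than `ε`,
so `d(x, T x) < 2ε` by the triangle inequality. -/

theorem Nat.exists_mul_eq_mul_add_one_of_coprime {p r : ℕ} (h : p.Coprime r) (hr : 1 < r) :
    ∃ a < r, ∃ b < p, a * p = b * r + 1 := by
  obtain ⟨a, har, ha⟩ := Nat.exists_mul_mod_eq_one_of_coprime h hr
  have hdiv : p * a / r * r + 1 = p * a := by rw [← ha, Nat.div_add_mod']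
  refine ⟨a, har, p * a / r, Nat.div_lt_of_lt_mul ?_, by rw [mul_comm, hdiv]⟩
  have hp : 0 < p := Nat.pos_of_ne_zero (by rintro rfl; simp at ha)
  exact (Nat.mul_lt_mul_left hp).2 har |>.trans_eq (mul_comm p r)

theorem dist_apply_le_dist_iterate_succ_add {X : Type*} [PseudoMetricSpace X] (f : X → X) (x : X)
    (m : ℕ) : dist x (f x) ≤ dist x (f^[m + 1] x) + dist (f x) (f^[m] (f x)) := by
  rw [Function.iterate_succ_apply, dist_comm (f x)]
  exact dist_triangle _ _ _

/-- Fact 3.5: if a homeomorphism `T` of a metric space satisfies the very strong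
rigidity condition `sup_{t < q_{n+1}} sup_x d(x, T^{t qₙ} x) → 0` along an
increasing sequence `(qₙ)` of positive integers with consecutive terms coprime,
then `T` is the identity map. -/
theorem strong_rigidity_forces_identity {X : Type*} [MetricSpace X]
    (T : X ≃ₜ X) (q : ℕ → ℕ) (hpos : ∀ n, 0 < q n) (hmono : StrictMono q)
    (hcop : ∀ n, Nat.gcd (q n) (q (n + 1)) = 1)
    (hrig : ∀ ε : ℝ, 0 < ε → ∃ N : ℕ, ∀ n ≥ N, ∀ t < q (n + 1), ∀ x : X,
      dist x ((T : X → X)^[t * q n] x) < ε) :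
    ∀ x : X, T x = x := by
  intro x
  refine (eq_of_forall_dist_le fun ε hε => ?_).symm
  obtain ⟨N, hN⟩ := hrig (ε / 2) (by linarith)
  have hq : 1 < q (N + 1) := lt_of_le_of_lt (hpos N) (hmono N.lt_succ_self)
  obtain ⟨a, ha, b, hb, hab⟩ := Nat.exists_mul_eq_mul_add_one_of_coprime (hcop N) hq
  have close_x := hN N le_rfl a ha x
  have close_Tx := hN (N + 1) N.le_succ b (hb.trans (hmono (by omega))) (T x)
  rw [hab] at close_x
  linarith [dist_apply_le_dist_iterate_succ_add (T : X → X) x (b * q (N + 1))]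
end

section
/- Fix C ≥ 2. For d | N, define h(i) = ∑_{d' | d} Pow_N(i, d'), where Pow_N(i, d') = #{t ∈ [1,N] : gcd(t,N) = d', t^C ≡ i mod N}. Then ∑_{i<N} |Pow_N(i) − h(i)| ≤ N · ∑_{p | N, ν_p(N) > ν_p(d)} p^{−ν_p(d)}, where Pow_N(i) = #{t ∈ [1,N] : t^C ≡ i mod N} and ν_p denotes p-adic valuation. -/
/-!
Grouping the `t` with `t ^ C ≡ i` by `gcd t N`, the difference `Pow_N(i) - h(i)` is the number
of such `t` with `gcd t N ∤ d`, so the left side counts all `t ∈ [1, N]` with `gcd t N ∤ d`.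
Each of them is divisible by `p ^ (ν_p(d) + 1)` for a prime `p` with `ν_p(d) < ν_p(N)`, and there
are at most `N / p ^ ν_p(d)` multiples of that in `[1, N]`.
-/

open Finset

theorem Finset.sum_card_filter_eq_and {ι M : Type*} [DecidableEq M] (s : Finset ι)
    (t : Finset M) (f : ι → M) (p : ι → Prop) [DecidablePred p] :
    ∑ b ∈ t, #{a ∈ s | f a = b ∧ p a} = #{a ∈ s | f a ∈ t ∧ p a} := by
  rw [card_eq_sum_card_fiberwise (f := f) (t := t) fun a ha => (mem_filter.1 ha).2.1]
  refine sum_congr rfl fun b _ => congrArg card ?_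
  rw [filter_filter]
  exact filter_congr fun a _ => ⟨fun h => ⟨⟨h.1 ▸ ‹b ∈ t›, h.2⟩, h.1⟩, fun h => ⟨h.2, h.1.2⟩⟩

theorem Finset.sum_range_card_filter_and_modEq {ι : Type*} {N : ℕ} (hN : 0 < N)
    (s : Finset ι) (f : ι → ℕ) (p : ι → Prop) [DecidablePred p] :
    ∑ i ∈ range N, #{a ∈ s | p a ∧ f a ≡ i [MOD N]} = #{a ∈ s | p a} := by
  have hfiber : ∀ i ∈ range N,
      #{a ∈ s | p a ∧ f a ≡ i [MOD N]} = #{a ∈ s | f a % N = i ∧ p a} := fun i hi => by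
    refine congrArg card (filter_congr fun a _ => ?_)
    rw [Nat.ModEq, Nat.mod_eq_of_lt (mem_range.1 hi), and_comm]
  rw [sum_congr rfl hfiber, sum_card_filter_eq_and]
  exact congrArg card (filter_congr fun a _ => by simp [Nat.mod_lt _ hN])

theorem Finset.abs_card_filter_sub_card_filter_and {ι : Type*} (s : Finset ι)
    (p q : ι → Prop) [DecidablePred p] [DecidablePred q] :
    |(#{a ∈ s | p a} : ℝ) - #{a ∈ s | q a ∧ p a}| = #{a ∈ s | ¬ q a ∧ p a} := by
  have hsplit := card_filter_add_card_filter_not (s := {a ∈ s | p a}) q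
  simp only [filter_filter, and_comm (a := p _)] at hsplit
  rw [← hsplit, Nat.cast_add, add_sub_cancel_left, Nat.abs_cast]

theorem Nat.exists_prime_pow_dvd_of_not_gcd_dvd {t N d : ℕ} (ht : t ≠ 0) (hN : N ≠ 0)
    (hd : d ≠ 0) (h : ¬ t.gcd N ∣ d) :
    ∃ p ∈ N.primeFactors, d.factorization p < N.factorization p ∧
      p ^ (d.factorization p + 1) ∣ t := by
  rw [← factorization_le_iff_dvd (gcd_ne_zero_left ht) hd, Finsupp.le_def] at h
  simp only [not_forall, not_le] at h
  obtain ⟨p, hp⟩ := h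
  rw [factorization_gcd ht hN, Finsupp.inf_apply, lt_inf_iff] at hp
  have hpp : p.Prime := by
    by_contra hnp
    simp [factorization_eq_zero_of_not_prime _ hnp] at hp
  refine ⟨p, mem_primeFactors.2 ⟨hpp, dvd_of_factorization_pos (by omega), hN⟩, hp.2, ?_⟩
  exact (hpp.pow_dvd_iff_le_factorization ht).2 hp.1

theorem Nat.card_Icc_filter_dvd_le (N k : ℕ) {p : ℕ} (hp : 0 < p) :
    (#{t ∈ Icc 1 N | p ^ (k + 1) ∣ t} : ℝ) ≤ N * (1 / (p : ℝ) ^ k) := by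
  rw [show Icc 1 N = Ioc 0 N from rfl, Ioc_filter_dvd_card_eq_div]
  calc ((N / p ^ (k + 1) : ℕ) : ℝ) ≤ N / (p : ℝ) ^ (k + 1) := by
        exact_mod_cast Nat.cast_div_le
    _ ≤ N / (p : ℝ) ^ k := by
        gcongr
        · exact_mod_cast hp
        · exact Nat.le_succ k
    _ = N * (1 / (p : ℝ) ^ k) := by ring

theorem Nat.card_Icc_filter_not_gcd_dvd_le {N d : ℕ} (hd : d ≠ 0) :
    (#{t ∈ Icc 1 N | ¬ t.gcd N ∣ d} : ℝ) ≤
      N * ∑ p ∈ N.primeFactors with d.factorization p < N.factorization p,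
        1 / (p : ℝ) ^ d.factorization p := by
  set P := {p ∈ N.primeFactors | d.factorization p < N.factorization p}
  have hcover : {t ∈ Icc 1 N | ¬ t.gcd N ∣ d} ⊆
      P.biUnion fun p => {t ∈ Icc 1 N | p ^ (d.factorization p + 1) ∣ t} := by
    intro t ht
    obtain ⟨htN, hnd⟩ := mem_filter.1 ht
    obtain ⟨ht1, htN'⟩ := mem_Icc.1 htN
    obtain ⟨p, hpN, hlt, hdvd⟩ :=
      exists_prime_pow_dvd_of_not_gcd_dvd (by omega) (by omega) hd hnd
    exact mem_biUnion.2 ⟨p, mem_filter.2 ⟨hpN, hlt⟩, mem_filter.2 ⟨htN, hdvd⟩⟩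
  calc (#{t ∈ Icc 1 N | ¬ t.gcd N ∣ d} : ℝ)
      ≤ ∑ p ∈ P, (#{t ∈ Icc 1 N | p ^ (d.factorization p + 1) ∣ t} : ℝ) := by
        exact_mod_cast (card_le_card hcover).trans card_biUnion_le
    _ ≤ ∑ p ∈ P, N * (1 / (p : ℝ) ^ d.factorization p) :=
        sum_le_sum fun p hp =>
          card_Icc_filter_dvd_le N _ (prime_of_mem_primeFactors (mem_filter.1 hp).1).pos
    _ = _ := (mul_sum ..).symm

theorem pow_count_approximation_general (C : ℕ) (N : ℕ) (hN : 0 < N)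
    (d : ℕ) (hd : d ∣ N) :
    ∑ i ∈ range N,
        |(((Finset.Icc 1 N).filter (fun t => t ^ C ≡ i [MOD N])).card : ℝ) -
          ∑ d' ∈ d.divisors,
            (((Finset.Icc 1 N).filter
              (fun t => Nat.gcd t N = d' ∧ t ^ C ≡ i [MOD N])).card : ℝ)| ≤
      (N : ℝ) * ∑ p ∈ N.primeFactors.filter
          (fun p => d.factorization p < N.factorization p),
        (1 / (p : ℝ) ^ (d.factorization p)) := by
  have hd0 : d ≠ 0 := ne_zero_of_dvd_ne_zero hN.ne' hd
  have hmem : ∀ t : ℕ, t.gcd N ∈ d.divisors ↔ t.gcd N ∣ d := fun t => by simp [hd0]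
  calc _ = ∑ i ∈ range N, (#{t ∈ Icc 1 N | ¬ t.gcd N ∣ d ∧ t ^ C ≡ i [MOD N]} : ℝ) := by
        refine sum_congr rfl fun i _ => ?_
        rw [← Nat.cast_sum, sum_card_filter_eq_and]
        simp only [hmem]
        exact abs_card_filter_sub_card_filter_and ..
    _ = #{t ∈ Icc 1 N | ¬ t.gcd N ∣ d} := by
        rw [← Nat.cast_sum, sum_range_card_filter_and_modEq hN]
    _ ≤ _ := Nat.card_Icc_filter_not_gcd_dvd_le hd0

/-- Lemma 4.5 (approximation bound): with `Pow_N(i)` the number of `t ∈ [1, N]`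
with `t^C ≡ i (mod N)`, `Pow_N(i, d')` its restriction to `gcd(t, N) = d'`, and
`h(i) = ∑_{d' ∣ d} Pow_N(i, d')`, one has
`∑_{i<N} |Pow_N(i) − h(i)| ≤ N · ∑_{p ∣ N, ν_p(N) > ν_p(d)} p^{−ν_p(d)}`. -/
theorem pow_count_approximation (C : ℕ) (hC : 2 ≤ C) (N : ℕ) (hN : 0 < N)
    (d : ℕ) (hd : d ∣ N) :
    ∑ i ∈ range N,
        |(((Finset.Icc 1 N).filter (fun t => t ^ C ≡ i [MOD N])).card : ℝ) -
          ∑ d' ∈ d.divisors,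
            (((Finset.Icc 1 N).filter
              (fun t => Nat.gcd t N = d' ∧ t ^ C ≡ i [MOD N])).card : ℝ)| ≤
      (N : ℝ) * ∑ p ∈ N.primeFactors.filter
          (fun p => d.factorization p < N.factorization p),
        (1 / (p : ℝ) ^ (d.factorization p)) :=
  pow_count_approximation_general C N hN d hd
end

section
/- A nondecreasing sequence (q_n)_{n≥1} of positive integers is the sequence of denominators of convergents of some irrational number α if and only if, setting q_0 = 1, it satisfies q_{n+2} ≡ q_n (mod q_{n+1}) for all n ≥ 0 (together with q_1 ≥ 1 and strict growth q_{n+2} > q_{n+1} for n ≥ 0). -/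
/-!
Writing `q (n + 2) = a (n + 1) * q (n + 1) + q n`, the congruence together with strict growth says
exactly that the quotients `a n` are positive integers, i.e. that `q` is the sequence of continuants
of some positive partial quotients. Conversely, every sequence of positive partial quotients
occurs for an irrational number: the nested compact subsets of `∏ n, [a n, a n + 1]` cut out by
finitely many of the equations `x n = a n + 1 / x (n + 1)` have a common point `x`, and the
continued fraction algorithm applied to `1 / x 0` reads off `a 0, a 1, …` and never terminates.
-/

open Set GenContFract

/-- The denominators of the convergents of `[0; a 0, a 1, …]`, so `a n` is the partial quotient
`a_{n+1}` of the usual notation. -/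
def continuantDen (a : ℕ → ℕ) : ℕ → ℕ
  | 0 => 1
  | 1 => a 0
  | n + 2 => a (n + 1) * continuantDen a (n + 1) + continuantDen a n

section continuantDen

variable {a : ℕ → ℕ}

theorem continuantDen_modEq (a : ℕ → ℕ) (n : ℕ) :
    continuantDen a (n + 2) ≡ continuantDen a n [MOD continuantDen a (n + 1)] := by
  simp only [continuantDen, Nat.ModEq, Nat.mul_add_mod_self_right]

theorem continuantDen_pos (ha : ∀ n, 1 ≤ a n) (n : ℕ) : 0 < continuantDen a n := by
  induction n using Nat.twoStepInduction with
  | zero => exact Nat.one_pos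
  | one => exact ha 0
  | more n _ ih => exact Nat.add_pos_left (Nat.mul_pos (ha _) ih) _

theorem continuantDen_lt (ha : ∀ n, 1 ≤ a n) (n : ℕ) :
    continuantDen a (n + 1) < continuantDen a (n + 2) :=
  calc continuantDen a (n + 1) ≤ a (n + 1) * continuantDen a (n + 1) :=
        Nat.le_mul_of_pos_left _ (ha _)
    _ < continuantDen a (n + 2) := Nat.lt_add_of_pos_right (continuantDen_pos ha n)

theorem monotone_continuantDen (ha : ∀ n, 1 ≤ a n) : Monotone (continuantDen a) := by
  refine monotone_nat_of_le_succ fun n => ?_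
  cases n with
  | zero => exact ha 0
  | succ n => exact (continuantDen_lt ha n).le

end continuantDen

theorem exists_eq_continuantDen {q : ℕ → ℕ} (h0 : q 0 = 1) (h1 : 1 ≤ q 1)
    (hlt : ∀ n, q (n + 1) < q (n + 2)) (hmod : ∀ n, q (n + 2) ≡ q n [MOD q (n + 1)]) :
    ∃ a : ℕ → ℕ, (∀ n, 1 ≤ a n) ∧ q = continuantDen a := by
  have hle : ∀ n, q n ≤ q (n + 1)
    | 0 => by rw [h0]; exact h1
    | n + 1 => (hlt n).le
  choose c hc using fun n => (Nat.modEq_iff_dvd' ((hle n).trans (hle (n + 1)))).mp (hmod n).symm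
  have hrec : ∀ n, q (n + 2) = q (n + 1) * c n + q n := fun n => by
    have : q (n + 2) - q n = q (n + 1) * c n := hc n
    have := hle n; have : q (n + 1) ≤ q (n + 2) := hle (n + 1); omega
  have hc1 : ∀ n, 1 ≤ c n := fun n => Nat.pos_of_ne_zero fun hcn => by
    have h := hrec n
    rw [hcn, mul_zero, zero_add] at h
    have := hlt n; have := hle n
    omega
  refine ⟨fun | 0 => q 1 | n + 1 => c n, fun | 0 => h1 | n + 1 => hc1 n, funext fun n => ?_⟩
  induction n using Nat.twoStepInduction with
  | zero => exact h0
  | one => rfl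
  | more n ih ih' => rw [hrec, ih, ih', continuantDen, Nat.mul_comm]

namespace GenContFract

variable {K : Type*}

theorem of_s_get?_eq_floor [DivisionRing K] [LinearOrder K] [IsStrictOrderedRing K] [FloorRing K]
    {v : K} {x : ℕ → K} (h0 : Int.fract v = (x 0)⁻¹)
    (hx : ∀ n, Int.fract (x n) = (x (n + 1))⁻¹) (hne : ∀ n, x n ≠ 0) (n : ℕ) :
    (GenContFract.of v).s.get? n = some ⟨1, ⌊x n⌋⟩ := by
  induction n generalizing v x with
  | zero =>
    rw [← Stream'.Seq.head, of_s_head (h0 ▸ inv_ne_zero (hne 0)), h0, inv_inv]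
  | succ n ih =>
    rw [of_s_succ, h0, inv_inv]
    exact ih (hx 0) (fun n => hx (n + 1)) (fun n => hne (n + 1))

theorem exists_nat_of_s_get?_eq [Field K] [LinearOrder K] [IsStrictOrderedRing K] [FloorRing K]
    {v : K} {n : ℕ} {gp : Pair K} (h : (GenContFract.of v).s.get? n = some gp) :
    ∃ m : ℕ, 1 ≤ m ∧ gp = ⟨1, m⟩ := by
  obtain ⟨ha, z, hz⟩ := of_partNum_eq_one_and_exists_int_partDen_eq h
  have hz1 : 1 ≤ z := by
    exact_mod_cast hz ▸ of_one_le_get?_partDen (partDen_eq_s_b h)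
  obtain ⟨m, rfl⟩ := Int.eq_ofNat_of_zero_le (by omega : 0 ≤ z)
  refine ⟨m, by omega, ?_⟩
  cases gp
  simp_all

theorem dens_eq_continuantDen [DivisionRing K] {g : GenContFract K} {a : ℕ → ℕ}
    (hs : ∀ n, g.s.get? n = some ⟨1, a n⟩) (n : ℕ) : g.dens n = continuantDen a n := by
  induction n using Nat.twoStepInduction with
  | zero => simp [continuantDen]
  | one => simp [continuantDen, first_den_eq (hs 0)]
  | more n ih ih' =>
    rw [dens_recurrence (hs (n + 1)) ih ih', continuantDen, one_mul]
    push_cast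
    rfl

theorem irrational_iff_not_terminates (v : ℝ) :
    Irrational v ↔ ¬(GenContFract.of v).Terminates := by
  simp only [Irrational, Set.mem_range, terminates_iff_rat, not_exists, eq_comm]

end GenContFract

theorem Irrational.exists_of_s_get?_eq {α : ℝ} (hα : Irrational α) :
    ∃ a : ℕ → ℕ, (∀ n, 1 ≤ a n) ∧ ∀ n, (GenContFract.of α).s.get? n = some ⟨1, a n⟩ := by
  have hnt := (irrational_iff_not_terminates α).mp hα
  have : ∀ n, ∃ m : ℕ, 1 ≤ m ∧ (GenContFract.of α).s.get? n = some ⟨1, m⟩ := fun n => by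
    obtain ⟨gp, hgp⟩ := Option.ne_none_iff_exists'.mp fun h => hnt ⟨n, h⟩
    obtain ⟨m, hm, rfl⟩ := exists_nat_of_s_get?_eq hgp
    exact ⟨m, hm, hgp⟩
  choose a ha hs using this
  exact ⟨a, ha, hs⟩

theorem exists_forall_lt_sub_mul_eq_one (N : ℕ) (a : ℕ → ℝ) (ha : ∀ n, 1 ≤ a n) :
    ∃ y : ℕ → ℝ,
      (∀ n, y n ∈ Icc (a n) (a n + 1)) ∧ ∀ n < N, (y n - a n) * y (n + 1) = 1 := by
  induction N generalizing a with
  | zero => exact ⟨a, fun n => ⟨le_rfl, by linarith⟩, fun n hn => absurd hn n.not_lt_zero⟩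
  | succ N ih =>
    obtain ⟨y, hy, hyN⟩ := ih (fun n => a (n + 1)) fun n => ha (n + 1)
    have hy0 : 1 ≤ y 0 := (ha 1).trans (hy 0).1
    refine ⟨fun | 0 => a 0 + (y 0)⁻¹ | n + 1 => y n, fun | 0 => ⟨?_, ?_⟩ | n + 1 => hy n, ?_⟩
    · simp only [le_add_iff_nonneg_right, inv_nonneg]; linarith
    · simp only [add_le_add_iff_left]; exact inv_le_one_of_one_le₀ hy0
    · rintro (_ | n) hn
      · simp only [add_sub_cancel_left]; exact inv_mul_cancel₀ (by linarith)
      · exact hyN n (by omega)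

theorem exists_forall_eq_add_inv (a : ℕ → ℝ) (ha : ∀ n, 1 ≤ a n) :
    ∃ x : ℕ → ℝ, (∀ n, 1 ≤ x n) ∧ ∀ n, x n = a n + (x (n + 1))⁻¹ := by
  -- The equations are cleared of the inverse so that each `t N` is closed in `ℕ → ℝ`.
  let t : ℕ → Set (ℕ → ℝ) := fun N =>
    {y | (∀ n, y n ∈ Icc (a n) (a n + 1)) ∧ ∀ n < N, (y n - a n) * y (n + 1) = 1}
  have htcl : ∀ N, IsClosed (t N) := fun N => by
    simp only [t, ofPred_and, ofPred_forall]
    exact (isClosed_iInter fun n => isClosed_Icc.preimage (continuous_apply n)).inter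
      (isClosed_iInter fun n => isClosed_iInter fun _ => isClosed_eq (by fun_prop) continuous_const)
  have ht0 : IsCompact (t 0) :=
    (isCompact_univ_pi fun n => isCompact_Icc).of_isClosed_subset (htcl 0) fun y hy n _ => hy.1 n
  obtain ⟨x, hx⟩ := IsCompact.nonempty_iInter_of_sequence_nonempty_isCompact_isClosed t
    (fun N y hy => ⟨hy.1, fun n hn => hy.2 n (by omega)⟩)
    (fun N => exists_forall_lt_sub_mul_eq_one N a ha) ht0 htcl
  simp only [mem_iInter] at hx
  refine ⟨x, fun n => (ha n).trans ((hx 0).1 n).1, fun n => ?_⟩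
  rw [← eq_inv_of_mul_eq_one_left ((hx (n + 1)).2 n n.lt_succ_self), add_sub_cancel]

theorem inv_mem_Ico_of_one_lt {K : Type*} [Field K] [LinearOrder K] [IsStrictOrderedRing K]
    {y : K} (hy : 1 < y) : y⁻¹ ∈ Ico 0 1 :=
  ⟨inv_nonneg.2 (zero_le_one.trans hy.le), inv_lt_one_of_one_lt₀ hy⟩

theorem exists_irrational_of_s_get?_eq (a : ℕ → ℕ) (ha : ∀ n, 1 ≤ a n) :
    ∃ α : ℝ, Irrational α ∧ ∀ n, (GenContFract.of α).s.get? n = some ⟨1, a n⟩ := by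
  have ha' : ∀ n, (1 : ℝ) ≤ a n := fun n => mod_cast ha n
  obtain ⟨x, hx1, hx⟩ := exists_forall_eq_add_inv (fun n => a n) ha'
  have hgt : ∀ n, 1 < x n := fun n => by
    have := inv_pos.2 (zero_lt_one.trans_le (hx1 (n + 1)))
    linarith [hx n, ha' n]
  have hfloor : ∀ n, ⌊x n⌋ = a n := fun n => by
    rw [hx n, Int.floor_natCast_add, Int.floor_eq_zero_iff.2 (inv_mem_Ico_of_one_lt (hgt _)),
      add_zero]
  have hfract : ∀ n, Int.fract (x n) = (x (n + 1))⁻¹ := fun n => by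
    rw [hx n, Int.fract_natCast_add, Int.fract_eq_self.2 (inv_mem_Ico_of_one_lt (hgt _))]
  have hs := of_s_get?_eq_floor (Int.fract_eq_self.2 (inv_mem_Ico_of_one_lt (hgt 0))) hfract
    fun n => (zero_lt_one.trans (hgt n)).ne'
  refine ⟨(x 0)⁻¹, (irrational_iff_not_terminates _).2 fun ⟨n, hn⟩ => ?_, fun n => ?_⟩
  · exact Option.some_ne_none _ ((hs n).symm.trans hn)
  · rw [hs n, hfloor, Int.cast_natCast]

/-- Fact 4.13: a nondecreasing sequence of positive integers (with `q 0 = 1`)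
is the sequence of denominators of convergents of some irrational number iff it
satisfies `q (n+2) ≡ q n (mod q (n+1))` with strict growth `q (n+2) > q (n+1)`. -/
theorem denominators_characterization (q : ℕ → ℕ) (h0 : q 0 = 1) :
    (Monotone q ∧ 1 ≤ q 1 ∧ (∀ n, q (n + 1) < q (n + 2)) ∧
      ∀ n, q (n + 2) ≡ q n [MOD q (n + 1)]) ↔
    ∃ α : ℝ, Irrational α ∧ ∀ n, (GenContFract.of α).dens n = (q n : ℝ) := by
  constructor
  · rintro ⟨-, h1, hlt, hmod⟩
    obtain ⟨a, ha, rfl⟩ := exists_eq_continuantDen h0 h1 hlt hmod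
    obtain ⟨α, hα, hs⟩ := exists_irrational_of_s_get?_eq a ha
    exact ⟨α, hα, dens_eq_continuantDen hs⟩
  · rintro ⟨α, hα, hq⟩
    obtain ⟨a, ha, hs⟩ := hα.exists_of_s_get?_eq
    obtain rfl : q = continuantDen a :=
      funext fun n => mod_cast (hq n).symm.trans (dens_eq_continuantDen hs n)
    exact ⟨monotone_continuantDen ha, continuantDen_pos ha 1, continuantDen_lt ha,
      continuantDen_modEq a⟩
end

section
/- Let b ∈ ℝ with 1/1000 ≤ |b| ≤ 1/10, let q be a positive integer, and let β ∈ ℝ. Then ∫_𝕋 ‖b·cos(2π q x) − β‖ dx ≥ (2/π)|b| ≥ 1/(500π), where ‖t‖ denotes the distance from t to the nearest integer. -/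
open Real intervalIntegral

/-- distance to nearest integer -/
noncomputable def dInt (t : ℝ) : ℝ := |t - round t|

lemma dInt_lip : LipschitzWith 1 dInt := by
  apply LipschitzWith.of_dist_le_mul
  intro x y
  simp only [Real.dist_eq, NNReal.coe_one, one_mul, dInt]
  rw [abs_sub_le_iff]
  constructor
  · have h1 : |x - round x| ≤ |x - (round y : ℤ)| := round_le x (round y)
    have h2 : |x - (round y : ℝ)| ≤ |x - y| + |y - round y| := by
      have := abs_sub_le x y (round y : ℝ); linarith
    linarith
  · have h1 : |y - round y| ≤ |y - (round x : ℤ)| := round_le y (round x)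
    have h2 : |y - (round x : ℝ)| ≤ |y - x| + |x - round x| := by
      have := abs_sub_le y x (round x : ℝ); linarith
    rw [abs_sub_comm x y]; linarith

lemma dInt_triangle (u v : ℝ) : dInt (u - v) ≤ dInt u + dInt v := by
  have h1 : dInt (u - v) ≤ |(u - v) - ((round u - round v : ℤ) : ℝ)| :=
    round_le (u - v) (round u - round v)
  have h2 : ((round u - round v : ℤ) : ℝ) = (round u : ℝ) - (round v : ℝ) := by push_cast; ring
  rw [h2] at h1
  calc dInt (u - v) ≤ |(u - round u) - (v - round v)| := by
        convert h1 using 2; ring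
    _ ≤ |u - round u| + |v - round v| := abs_sub _ _
    _ = dInt u + dInt v := rfl

lemma dInt_of_small {t : ℝ} (h : |t| ≤ 1/5) : dInt t = |t| := by
  have : round t = 0 := by
    rw [round_eq_zero_iff, Set.mem_Ico]
    rw [abs_le] at h
    constructor <;> linarith
  simp [dInt, this]

/-- A cosine wave of amplitude `1/1000 ≤ |b| ≤ 1/10` stays far from any
constant `β` on average, in the metric of distance to the nearest integer:
`∫₀¹ ‖b cos(2πqx) − β‖ dx ≥ (2/π)|b| ≥ 1/(500π)`. -/
theorem cosine_far_from_constant (b : ℝ) (hb1 : 1 / 1000 ≤ |b|)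
    (hb2 : |b| ≤ 1 / 10) (q : ℕ) (hq : 0 < q) (β : ℝ) :
    (2 / π) * |b| ≤ ∫ x in (0 : ℝ)..1,
        |b * Real.cos (2 * π * (q : ℝ) * x) - β -
          round (b * Real.cos (2 * π * (q : ℝ) * x) - β)| ∧
    1 / (500 * π) ≤ (2 / π) * |b| := by
  have hπ : (0:ℝ) < π := pi_pos
  have hq0 : (0:ℝ) < (q:ℝ) := by exact_mod_cast hq
  constructor
  · -- main inequality
    set g : ℝ → ℝ := fun x => dInt (b * Real.cos (2 * π * (q : ℝ) * x) - β) with hg_def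
    have hgcont : Continuous g :=
      dInt_lip.continuous.comp (by continuity)
    have hper : Function.Periodic g 1 := by
      intro x
      simp only [hg_def]
      congr 2
      rw [show 2 * π * (q:ℝ) * (x + 1) = 2 * π * (q:ℝ) * x + (q:ℝ) * (2 * π) by ring,
        Real.cos_add_nat_mul_two_pi]
    set c : ℝ := 1 / (2 * q) with hc_def
    -- pointwise bound
    have key : ∀ x : ℝ, 2 * |b| * |Real.cos (2 * π * (q:ℝ) * x)| ≤ g x + g (x + c) := by
      intro x
      have hcos : Real.cos (2 * π * (q:ℝ) * (x + c)) = - Real.cos (2 * π * (q:ℝ) * x) := by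
        rw [show 2 * π * (q:ℝ) * (x + c) = 2 * π * (q:ℝ) * x + π by
          rw [hc_def]; field_simp]
        exact Real.cos_add_pi _
      have htri := dInt_triangle (b * Real.cos (2 * π * (q:ℝ) * x) - β)
        (b * Real.cos (2 * π * (q:ℝ) * (x + c)) - β)
      rw [hcos] at htri
      have heq : (b * Real.cos (2 * π * (q:ℝ) * x) - β) - (b * (- Real.cos (2 * π * (q:ℝ) * x)) - β)
          = 2 * b * Real.cos (2 * π * (q:ℝ) * x) := by ring
      rw [heq] at htri
      have hsmall : |2 * b * Real.cos (2 * π * (q:ℝ) * x)| ≤ 1/5 := by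
        rw [abs_mul, abs_mul, abs_two]
        have hc1 : |Real.cos (2 * π * (q:ℝ) * x)| ≤ 1 := Real.abs_cos_le_one _
        nlinarith [abs_nonneg b, abs_nonneg (Real.cos (2 * π * (q:ℝ) * x))]
      rw [dInt_of_small hsmall, abs_mul, abs_mul, abs_two] at htri
      simpa [hg_def, hcos] using htri
    -- integrability
    have hint : ∀ t₁ t₂ : ℝ, IntervalIntegrable g MeasureTheory.volume t₁ t₂ :=
      fun t₁ t₂ => hgcont.intervalIntegrable t₁ t₂
    have hint2 : IntervalIntegrable (fun x => g (x + c)) MeasureTheory.volume 0 1 :=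
      (hgcont.comp (continuous_id.add continuous_const)).intervalIntegrable 0 1
    -- shifted integral equals the original
    have hshift : (∫ x in (0:ℝ)..1, g (x + c)) = ∫ x in (0:ℝ)..1, g x := by
      rw [intervalIntegral.integral_comp_add_right g c]
      have := hper.intervalIntegral_add_eq c 0
      simpa [add_comm] using this
    -- integral of |cos(2πqx)| over [0,1] is 2/π
    have hcosint : (∫ x in (0:ℝ)..1, |Real.cos (2 * π * (q:ℝ) * x)|) = 2 / π := by
      have h1 : (∫ x in (0:ℝ)..1, |Real.cos (2 * π * (q:ℝ) * x)|)
          = (2 * π * (q:ℝ))⁻¹ • ∫ u in (2 * π * (q:ℝ) * 0)..(2 * π * (q:ℝ) * 1), |Real.cos u| := by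
        rw [← intervalIntegral.integral_comp_mul_left (fun u => |Real.cos u|)
          (by positivity : 2 * π * (q:ℝ) ≠ 0)]
      have hpercos : Function.Periodic (fun u => |Real.cos u|) π := by
        intro u; simp [Real.cos_add_pi]
      have h2 : (∫ u in (0:ℝ)..(((2 * q : ℤ)) • π), |Real.cos u|)
          = (2 * q : ℤ) • ∫ u in (0:ℝ)..π, |Real.cos u| := by
        have := hpercos.intervalIntegral_add_zsmul_eq (2 * q) 0
          (fun t₁ t₂ => (Real.continuous_cos.abs).intervalIntegrable t₁ t₂)
        simpa using this
      have h3 : (∫ u in (0:ℝ)..π, |Real.cos u|) = 2 := by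
        have hsplit : (∫ u in (0:ℝ)..π, |Real.cos u|)
            = (∫ u in (0:ℝ)..(π/2), |Real.cos u|) + ∫ u in (π/2)..π, |Real.cos u| := by
          exact (intervalIntegral.integral_add_adjacent_intervals
            ((Real.continuous_cos.abs).intervalIntegrable _ _)
            ((Real.continuous_cos.abs).intervalIntegrable _ _)).symm
        have ha : (∫ u in (0:ℝ)..(π/2), |Real.cos u|) = ∫ u in (0:ℝ)..(π/2), Real.cos u := by
          apply intervalIntegral.integral_congr
          intro u hu
          rw [Set.uIcc_of_le (by positivity)] at hu
          exact abs_of_nonneg (Real.cos_nonneg_of_mem_Icc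
            ⟨by linarith [hu.1], hu.2⟩)
        have hb' : (∫ u in (π/2)..π, |Real.cos u|) = ∫ u in (π/2)..π, -Real.cos u := by
          apply intervalIntegral.integral_congr
          intro u hu
          rw [Set.uIcc_of_le (by linarith)] at hu
          exact abs_of_nonpos (Real.cos_nonpos_of_pi_div_two_le_of_le hu.1
            (by linarith [hu.2]))
        rw [hsplit, ha, hb', intervalIntegral.integral_neg, integral_cos, integral_cos]
        simp [Real.sin_pi_div_two, Real.sin_pi]
        norm_num
      simp only [zsmul_eq_mul] at h2
      have h4 : (2 * π * (q:ℝ)) * 1 = ((2 * q : ℤ) : ℝ) * π := by push_cast; ring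
      rw [h1, mul_zero, h4, h2, h3, smul_eq_mul]
      push_cast
      field_simp
    -- combine
    have hmono : (∫ x in (0:ℝ)..1, 2 * |b| * |Real.cos (2 * π * (q:ℝ) * x)|)
        ≤ ∫ x in (0:ℝ)..1, (g x + g (x + c)) := by
      have hcont2 : Continuous fun x : ℝ => 2 * |b| * |Real.cos (2 * π * (q:ℝ) * x)| :=
        continuous_const.mul ((Real.continuous_cos.comp
          ((continuous_const : Continuous fun _ : ℝ => 2 * π * (q:ℝ)).mul continuous_id)).abs)
      apply intervalIntegral.integral_mono_on (by norm_num)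
        (hcont2.intervalIntegrable _ _) ((hint 0 1).add hint2)
      intro x _
      exact key x
    have hL : (∫ x in (0:ℝ)..1, 2 * |b| * |Real.cos (2 * π * (q:ℝ) * x)|)
        = 2 * |b| * (2 / π) := by
      rw [intervalIntegral.integral_const_mul, hcosint]
    have hR : (∫ x in (0:ℝ)..1, (g x + g (x + c)))
        = 2 * ∫ x in (0:ℝ)..1, g x := by
      rw [intervalIntegral.integral_add (hint 0 1) hint2, hshift]; ring
    rw [hL, hR] at hmono
    have : (2 / π) * |b| ≤ ∫ x in (0:ℝ)..1, g x := by linarith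
    exact this
  · have h : (1:ℝ) / (500 * π) = (2 / π) * (1/1000) := by
      field_simp
      ring
    rw [h]
    exact mul_le_mul_of_nonneg_left hb1 (by positivity)
end

section
/- For all positive integers k ≥ 2 and q, and any integer ℓ, the number of (k−1)-tuples (h_1, …, h_{k−1}) ∈ {0,…,q−1}^{k−1} such that q divides ℓ·k!·h_1⋯h_{k−1} is at most τ(q')^{k−1} · q^{k−1}/q', where q' = q/gcd(q, k!·ℓ) and τ is the number-of-divisors function. -/
/-!
Write `q' ∣ q` for the part of `q` not absorbed by `k!·ℓ`, so the condition is `q' ∣ ∏ hᵢ`.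
Any such tuple has a factorisation `q' = f₁ ⋯ f_{k-1}` with `fᵢ ∣ hᵢ`, so the tuples are covered
by the boxes `∏ᵢ {multiples of fᵢ in [0, q)}`, one per such factorisation. Each box has exactly
`∏ᵢ q / fᵢ = q^{k-1} / q'` points, and there are at most `τ(q')^{k-1}` factorisations.
-/

open Finset

theorem Finset.exists_dvd_prod_eq_of_dvd_prod {ι α : Type*} [CommMonoid α] [DecompositionMonoid α]
    [Subsingleton αˣ] [DecidableEq ι] (s : Finset ι) (f : ι → α) {n : α}
    (hn : n ∣ ∏ i ∈ s, f i) : ∃ g : ι → α, (∀ i ∈ s, g i ∣ f i) ∧ ∏ i ∈ s, g i = n := by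
  induction s using Finset.induction_on generalizing n with
  | empty =>
    rw [prod_empty] at hn
    exact ⟨fun _ => 1, by simp, (isUnit_iff_eq_one.mp (isUnit_of_dvd_one hn)).symm⟩
  | insert a s ha ih =>
    rw [prod_insert ha] at hn
    obtain ⟨na, ns, hna, hns, rfl⟩ := exists_dvd_and_dvd_of_dvd_mul hn
    obtain ⟨g, hg, hprod⟩ := ih hns
    have hupdate : ∀ i ∈ s, Function.update g a na i = g i := fun i hi =>
      Function.update_of_ne (ne_of_mem_of_not_mem hi ha) _ _
    refine ⟨Function.update g a na, fun i hi => ?_, ?_⟩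
    · rcases mem_insert.mp hi with rfl | hi
      · simpa using hna
      · simpa [hupdate i hi] using hg i hi
    · rw [prod_insert ha, Function.update_self, prod_congr rfl hupdate, hprod]

theorem Nat.dvd_mul_iff_div_gcd_dvd {q m n : ℕ} (hq : 0 < q) : q ∣ m * n ↔ q / q.gcd m ∣ n := by
  refine ⟨fun h => ?_, fun h => ?_⟩
  · rw [← Nat.modEq_zero_iff_dvd] at h ⊢
    exact Nat.ModEq.cancel_left_div_gcd hq (by simpa using h)
  · simpa [Nat.mul_div_cancel' (Nat.gcd_dvd_left q m)] using mul_dvd_mul (Nat.gcd_dvd_right q m) h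

theorem Nat.card_filter_range_dvd {d q : ℕ} (hdq : d ∣ q) : #{x ∈ range q | d ∣ x} = q / d := by
  obtain rfl | hd := d.eq_zero_or_pos
  · simp [Nat.eq_zero_of_zero_dvd hdq]
  have himage : {x ∈ range q | d ∣ x} = (range (q / d)).image (d * ·) := by
    ext x
    simp only [mem_filter, mem_range, mem_image, Nat.lt_div_iff_mul_lt' hdq]
    constructor
    · rintro ⟨hx, c, rfl⟩
      exact ⟨c, hx, rfl⟩
    · rintro ⟨c, hc, rfl⟩
      exact ⟨hc, dvd_mul_right d c⟩
  rw [himage, Finset.card_image_of_injective _ (fun a b hab => Nat.eq_of_mul_eq_mul_left hd hab),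
    card_range]

theorem Nat.card_finMulAntidiag_le (d n : ℕ) : #(Nat.finMulAntidiag d n) ≤ #n.divisors ^ d := by
  obtain rfl | hn := eq_or_ne n 0
  · simp
  rw [Nat.finMulAntidiag_eq_piFinset_divisors_filter dvd_rfl hn]
  calc _ ≤ #(Fintype.piFinset fun _ : Fin d => n.divisors) := card_filter_le _ _
    _ = #n.divisors ^ d := by simp

section DivisibleTuples

variable {ι : Type*} [Fintype ι] [DecidableEq ι]

def multiplesBox (q : ℕ) (f : ι → ℕ) : Finset (ι → ℕ) :=
  Fintype.piFinset fun i => {x ∈ range q | f i ∣ x}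

theorem card_multiplesBox_mul_prod {q : ℕ} {f : ι → ℕ} (hf : ∀ i, f i ∣ q) :
    #(multiplesBox q f) * ∏ i, f i = q ^ Fintype.card ι := by
  rw [multiplesBox, Fintype.card_piFinset, ← prod_mul_distrib, ← Finset.card_univ,
    ← Finset.prod_const]
  refine prod_congr rfl fun i _ => ?_
  rw [Nat.card_filter_range_dvd (hf i), Nat.div_mul_cancel (hf i)]

end DivisibleTuples

theorem filter_dvd_prod_subset_biUnion_multiplesBox {d n : ℕ} (q : ℕ) (hn : n ≠ 0) :
    {h ∈ Fintype.piFinset (fun _ : Fin d => range q) | n ∣ ∏ i, h i} ⊆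
      (Nat.finMulAntidiag d n).biUnion (multiplesBox q) := by
  intro h hh
  rw [mem_filter, Fintype.mem_piFinset] at hh
  obtain ⟨f, hf, hprod⟩ := exists_dvd_prod_eq_of_dvd_prod univ h hh.2
  refine mem_biUnion.mpr ⟨f, Nat.mem_finMulAntidiag.mpr ⟨hprod, hn⟩, ?_⟩
  exact Fintype.mem_piFinset.mpr fun i => mem_filter.mpr ⟨hh.1 i, hf i (mem_univ i)⟩

theorem card_filter_dvd_prod_mul_le {d n q : ℕ} (hnq : n ∣ q) :
    #{h ∈ Fintype.piFinset (fun _ : Fin d => range q) | n ∣ ∏ i, h i} * n ≤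
      #n.divisors ^ d * q ^ d := by
  obtain rfl | hn := eq_or_ne n 0
  · simp
  have hbox : ∀ f ∈ Nat.finMulAntidiag d n, #(multiplesBox q f) * n = q ^ d := fun f hf => by
    rw [← Nat.prod_eq_of_mem_finMulAntidiag hf, card_multiplesBox_mul_prod fun i =>
      (Nat.dvd_of_mem_finMulAntidiag hf i).trans hnq, Fintype.card_fin]
  calc _ ≤ #((Nat.finMulAntidiag d n).biUnion (multiplesBox q)) * n :=
        Nat.mul_le_mul_right n (card_le_card (filter_dvd_prod_subset_biUnion_multiplesBox q hn))
    _ ≤ (∑ f ∈ Nat.finMulAntidiag d n, #(multiplesBox q f)) * n :=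
        Nat.mul_le_mul_right n card_biUnion_le
    _ = #(Nat.finMulAntidiag d n) * q ^ d := by
        rw [sum_mul, sum_congr rfl hbox, sum_const, smul_eq_mul]
    _ ≤ #n.divisors ^ d * q ^ d := Nat.mul_le_mul_right _ (Nat.card_finMulAntidiag_le d n)

theorem divisibility_tuple_count_general (k : ℕ) (q : ℕ) (hq : 0 < q)
    (ℓ : ℤ) :
    (((Fintype.piFinset fun _ : Fin (k - 1) => Finset.range q).filter
        (fun h => (q : ℤ) ∣ ℓ * (Nat.factorial k : ℤ) * ∏ i, (h i : ℤ))).card : ℝ) ≤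
      ((Nat.divisors (q / Nat.gcd q ((Nat.factorial k : ℤ) * ℓ).natAbs)).card : ℝ) ^ (k - 1) *
        (q : ℝ) ^ (k - 1) / (q / Nat.gcd q ((Nat.factorial k : ℤ) * ℓ).natAbs : ℕ) := by
  set q' : ℕ := q / q.gcd ((Nat.factorial k : ℤ) * ℓ).natAbs
  have hq'q : q' ∣ q := Nat.div_dvd_of_dvd (Nat.gcd_dvd_left _ _)
  have hq' : 0 < q' := Nat.pos_of_dvd_of_pos hq'q hq
  have hcond : ∀ h : Fin (k - 1) → ℕ,
      (q : ℤ) ∣ ℓ * (Nat.factorial k : ℤ) * ∏ i, (h i : ℤ) ↔ q' ∣ ∏ i, h i := fun h => by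
    rw [Int.natCast_dvd, ← Nat.dvd_mul_iff_div_gcd_dvd hq, ← Int.natAbs_natCast (∏ i, h i),
      ← Int.natAbs_mul]
    push_cast
    ring_nf
  rw [filter_congr fun h _ => hcond h, le_div_iff₀ (by exact_mod_cast hq')]
  exact_mod_cast card_filter_dvd_prod_mul_le hq'q

/-- The number of `(k−1)`-tuples `(h₁,…,h_{k−1}) ∈ {0,…,q−1}^{k−1}` with
`q ∣ ℓ·k!·h₁⋯h_{k−1}` is at most `τ(q')^{k−1} · q^{k−1}/q'`, where
`q' = q / gcd(q, k!·ℓ)`. -/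
theorem divisibility_tuple_count (k : ℕ) (hk : 2 ≤ k) (q : ℕ) (hq : 0 < q)
    (ℓ : ℤ) :
    (((Fintype.piFinset fun _ : Fin (k - 1) => Finset.range q).filter
        (fun h => (q : ℤ) ∣ ℓ * (Nat.factorial k : ℤ) * ∏ i, (h i : ℤ))).card : ℝ) ≤
      ((Nat.divisors (q / Nat.gcd q ((Nat.factorial k : ℤ) * ℓ).natAbs)).card : ℝ) ^ (k - 1) *
        (q : ℝ) ^ (k - 1) / (q / Nat.gcd q ((Nat.factorial k : ℤ) * ℓ).natAbs : ℕ) :=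
  divisibility_tuple_count_general k q hq ℓ
end
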